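/- If φ : L → L' is a surjective simplicial finite-fibration and L or L' is strongly collapsible, then TC_n(φ) = SD(φ∘p₁,…,φ∘p_n) = 0. -/

import Mathlib

noncomputable section

/-- An abstract simplicial complex on a vertex type `V`. -/
structure ASC (V : Type) where
  faces : Set (Finset V)
  nonempty_of_mem : ∀ ⦃σ⦄, σ ∈ faces → σ.Nonempty
  down_closed : ∀ ⦃σ⦄, σ ∈ faces → ∀ ⦃τ⦄, τ ⊆ σ → τ.Nonempty → τ ∈ faces

/-- A simplicial map between abstract simplicial complexes. -/
structure SMap {V W : Type} [DecidableEq W] (K : ASC V) (L : ASC W) where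
  toFun : V → W
  map_faces : ∀ ⦃σ⦄, σ ∈ K.faces → σ.image toFun ∈ L.faces

/-- The identity simplicial map. -/
def SMap.id {V : Type} [DecidableEq V] (K : ASC V) : SMap K K :=
  ⟨fun v => v, fun σ hσ => by simpa using hσ⟩

/-- Composition of simplicial maps. -/
def SMap.comp {U V W : Type} [DecidableEq V] [DecidableEq W]
    {K : ASC U} {L : ASC V} {M : ASC W}
    (g : SMap L M) (f : SMap K L) : SMap K M :=
  ⟨g.toFun ∘ f.toFun, fun σ hσ => by
    rw [show σ.image (g.toFun ∘ f.toFun) = (σ.image f.toFun).image g.toFun by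
      simp [Finset.image_image]]
    exact g.map_faces (f.map_faces hσ)⟩

/-- Two simplicial maps are contiguous if the union of the images of every
simplex is a simplex of the codomain. -/
def Contiguous {V W : Type} [DecidableEq W] {K : ASC V} {L : ASC W}
    (f g : SMap K L) : Prop :=
  ∀ ⦃σ⦄, σ ∈ K.faces → σ.image f.toFun ∪ σ.image g.toFun ∈ L.faces

/-- Two simplicial maps are in the same contiguity class if they are joined by
a finite chain of pairwise contiguous simplicial maps. -/
def ContigClass {V W : Type} [DecidableEq W] {K : ASC V} {L : ASC W}
    (f g : SMap K L) : Prop :=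
  Relation.ReflTransGen Contiguous f g

/-- `N` is a subcomplex of `K`. -/
def IsSubcomplex {V : Type} (N K : ASC V) : Prop :=
  N.faces ⊆ K.faces

/-- Restriction of a simplicial map to a subcomplex. -/
def SMap.restrict {V W : Type} [DecidableEq W] {N K : ASC V} {L : ASC W}
    (h : IsSubcomplex N K) (f : SMap K L) : SMap N L :=
  ⟨f.toFun, fun _ hσ => f.map_faces (h hσ)⟩

/-- `SDcover φ n` : the domain is covered by `n+1` subcomplexes on each of which
all restrictions of the maps `φ i` are pairwise in the same contiguity class. -/
def SDcover {V W : Type} [DecidableEq W] {K : ASC V} {L : ASC W} {m : ℕ}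
    (φ : Fin m → SMap K L) (n : ℕ) : Prop :=
  ∃ (Ls : Fin (n + 1) → ASC V) (h : ∀ k, IsSubcomplex (Ls k) K),
    (∀ σ ∈ K.faces, ∃ k, σ ∈ (Ls k).faces) ∧
    ∀ k i j, ContigClass (SMap.restrict (h k) (φ i)) (SMap.restrict (h k) (φ j))

/-- The higher contiguity distance `SD(φ₁, …, φ_m)` as a value in `ℕ∞`. -/
def SD {V W : Type} [DecidableEq W] {K : ASC V} {L : ASC W} {m : ℕ}
    (φ : Fin m → SMap K L) : ℕ∞ :=
  sInf {N : ℕ∞ | ∃ n : ℕ, N = n ∧ SDcover φ n}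

/-- The `n`-fold categorical power of a simplicial complex. -/
def ASC.pow {V : Type} [DecidableEq V] (K : ASC V) (n : ℕ) : ASC (Fin n → V) where
  faces := {σ | σ.Nonempty ∧ ∀ i, σ.image (fun v => v i) ∈ K.faces}
  nonempty_of_mem := fun _ hσ => hσ.1
  down_closed := fun σ hσ τ hτσ hτ =>
    ⟨hτ, fun i => K.down_closed (hσ.2 i)
      (Finset.image_subset_image (f := fun v => v i) hτσ) (hτ.image _)⟩

/-- The `i`-th projection from the `n`-fold categorical power. -/
def ASC.proj {V : Type} [DecidableEq V] (K : ASC V) (n : ℕ) (i : Fin n) :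
    SMap (K.pow n) K :=
  ⟨fun v => v i, fun _ hσ => hσ.2 i⟩

/-- The power of a simplicial map. -/
def SMap.pow {V W : Type} [DecidableEq V] [DecidableEq W] {K : ASC V} {L : ASC W}
    (f : SMap K L) (n : ℕ) : SMap (K.pow n) (L.pow n) :=
  ⟨fun v i => f.toFun (v i), fun σ hσ => by
    obtain ⟨h1, h2⟩ := hσ
    refine ⟨h1.image _, fun i => ?_⟩
    have h := f.map_faces (h2 i)
    rw [Finset.image_image] at h ⊢
    exact h⟩

/-- The higher discrete topological complexity `TC_n(K)`. -/
def TCn {V : Type} [DecidableEq V] (K : ASC V) (n : ℕ) : ℕ∞ :=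
  SD (fun i : Fin n => K.proj n i)

/-- The higher discrete topological complexity of a simplicial map. -/
def TCnMap {V W : Type} [DecidableEq V] [DecidableEq W] {K : ASC V} {L : ASC W}
    (φ : SMap K L) (n : ℕ) : ℕ∞ :=
  SD (fun i : Fin n => φ.comp (K.proj n i))

/-- The binary categorical product of two simplicial complexes. -/
def ASC.prod {V W : Type} [DecidableEq V] [DecidableEq W]
    (K : ASC V) (L : ASC W) : ASC (V × W) where
  faces := {σ | σ.Nonempty ∧ σ.image Prod.fst ∈ K.faces ∧ σ.image Prod.snd ∈ L.faces}
  nonempty_of_mem := fun _ hσ => hσ.1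
  down_closed := fun σ hσ τ hτσ hτ =>
    ⟨hτ, K.down_closed hσ.2.1 (Finset.image_subset_image hτσ) (hτ.image _),
      L.down_closed hσ.2.2 (Finset.image_subset_image hτσ) (hτ.image _)⟩

/-- The path complex `I_m` : vertices `0, …, m`, maximal simplices `{i, i+1}`. -/
def pathComplex (m : ℕ) : ASC (Fin (m + 1)) where
  faces := {σ | σ.Nonempty ∧ ∃ i : ℕ, ∀ j ∈ σ, (j : ℕ) = i ∨ (j : ℕ) = i + 1}
  nonempty_of_mem := fun _ hσ => hσ.1
  down_closed := fun _ hσ _ hτσ hτ =>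
    ⟨hτ, hσ.2.imp fun _ h => fun j hj => h j (hτσ hj)⟩

/-- Two simplicial complexes have the same strong homotopy type. -/
def StrongHomotopyType {V W : Type} [DecidableEq V] [DecidableEq W]
    (K : ASC V) (L : ASC W) : Prop :=
  ∃ (f : SMap K L) (g : SMap L K),
    ContigClass (g.comp f) (SMap.id K) ∧ ContigClass (f.comp g) (SMap.id L)

/-- The one-point simplicial complex. -/
def ptASC : ASC Unit where
  faces := {σ | σ.Nonempty}
  nonempty_of_mem := fun _ hσ => hσ
  down_closed := fun _ _ _ _ hτ => hτ

/-- A simplicial complex is strongly collapsible if it has the strong homotopy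
type of a point. -/
def StronglyCollapsible {V : Type} [DecidableEq V] (K : ASC V) : Prop :=
  StrongHomotopyType K ptASC

/-- The inclusion `N → N × I_m` at level `0`. -/
def inclZero {V : Type} [DecidableEq V] (N : ASC V) (m : ℕ) :
    SMap N (N.prod (pathComplex m)) :=
  ⟨fun v => (v, 0), fun σ hσ => by
    refine ⟨(N.nonempty_of_mem hσ).image _, ?_, ?_⟩
    · rw [Finset.image_image, show (Prod.fst ∘ fun v : V => (v, (0 : Fin (m + 1))))
        = fun v => v from rfl, Finset.image_id']
      exact hσ
    · rw [Finset.image_image]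
      refine ⟨(N.nonempty_of_mem hσ).image _, 0, fun j hj => ?_⟩
      simp only [Finset.mem_image, Function.comp] at hj
      obtain ⟨v, -, rfl⟩ := hj
      simp⟩

/-- A simplicial finite-fibration : the homotopy lifting property with respect
to simplicial homotopies `N × I_m → L'` with `N` finite. -/
def IsFiniteFibration {V W : Type} [DecidableEq V] [DecidableEq W]
    {K : ASC V} {L : ASC W} (φ : SMap K L) : Prop :=
  ∀ (U : Type) [Fintype U] [DecidableEq U] (N : ASC U) (m : ℕ) (g : SMap N K)
    (G : SMap (N.prod (pathComplex m)) L),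
    (∀ v, G.toFun (v, 0) = φ.toFun (g.toFun v)) →
    ∃ Gt : SMap (N.prod (pathComplex m)) K,
      (∀ v, Gt.toFun (v, 0) = g.toFun v) ∧ (∀ x, φ.toFun (Gt.toFun x) = G.toFun x)

/-- The constant simplicial map at a vertex `v₀` of `L`. -/
def constMap {V W : Type} [DecidableEq W] (K : ASC V) {L : ASC W} {v₀ : W}
    (hv₀ : {v₀} ∈ L.faces) : SMap K L :=
  ⟨fun _ => v₀, fun σ hσ => by
    have hsub : σ.image (fun _ => v₀) ⊆ {v₀} := by
      intro x hx
      simp only [Finset.mem_image] at hx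
      obtain ⟨v, -, rfl⟩ := hx
      simp
    exact L.down_closed hv₀ hsub ((K.nonempty_of_mem hσ).image _)⟩

/-- A simplicial map is a strong equivalence if it admits an inverse up to
contiguity class. -/
def IsStrongEquiv {V W : Type} [DecidableEq V] [DecidableEq W]
    {K : ASC V} {L : ASC W} (f : SMap K L) : Prop :=
  ∃ g : SMap L K,
    ContigClass (g.comp f) (SMap.id K) ∧ ContigClass (f.comp g) (SMap.id L)

lemma SMap.ext {V W : Type} [DecidableEq W] {K : ASC V} {L : ASC W}
    {f g : SMap K L} (h : f.toFun = g.toFun) : f = g := by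
  cases f; cases g; simpa using h

instance {V : Type} (K : ASC V) : Subsingleton (SMap K ptASC) :=
  ⟨fun _ _ => SMap.ext (funext fun _ => Subsingleton.elim _ _)⟩

section Contiguity

variable {U V W : Type} [DecidableEq V] [DecidableEq W] {K : ASC U} {L : ASC V} {M : ASC W}

lemma Contiguous.symm {f g : SMap K L} (h : Contiguous f g) : Contiguous g f := by
  intro σ hσ
  rw [Finset.union_comm]
  exact h hσ

lemma ContigClass.symm {f g : SMap K L} (h : ContigClass f g) : ContigClass g f := by
  induction h with
  | refl => exact .refl
  | tail _ hcontig ih => exact (Relation.ReflTransGen.single hcontig.symm).trans ih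

lemma Contiguous.comp_left {f g : SMap K L} (h : SMap L M) (hfg : Contiguous f g) :
    Contiguous (h.comp f) (h.comp g) := by
  intro σ hσ
  have himage : σ.image (h.comp f).toFun ∪ σ.image (h.comp g).toFun
      = (σ.image f.toFun ∪ σ.image g.toFun).image h.toFun := by
    simp only [SMap.comp, Finset.image_union, Finset.image_image]
  rw [himage]
  exact h.map_faces (hfg hσ)

lemma ContigClass.comp_left {f g : SMap K L} (h : SMap L M) (hfg : ContigClass f g) :
    ContigClass (h.comp f) (h.comp g) :=
  Relation.ReflTransGen.lift h.comp (fun _ _ => Contiguous.comp_left h) _ _ hfg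

lemma Contiguous.comp_right {f g : SMap L M} (hfg : Contiguous f g) (h : SMap K L) :
    Contiguous (f.comp h) (g.comp h) := by
  intro σ hσ
  simpa only [SMap.comp, ← Finset.image_image] using hfg (h.map_faces hσ)

lemma ContigClass.comp_right {f g : SMap L M} (hfg : ContigClass f g) (h : SMap K L) :
    ContigClass (f.comp h) (g.comp h) :=
  Relation.ReflTransGen.lift (fun f : SMap L M => f.comp h)
    (fun _ _ hc => hc.comp_right h) _ _ hfg

end Contiguity

/- If `c : L → pt` and `s : pt → L` exhibit `L` as strongly collapsible, every map
`a` into `L` is in the contiguity class of `s ∘ c ∘ a`, and this map does not depend on `a`. -/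
lemma StronglyCollapsible.contigClass {U V : Type} [DecidableEq V] {K : ASC U} {L : ASC V}
    (hL : StronglyCollapsible L) (a b : SMap K L) : ContigClass a b := by
  obtain ⟨c, s, hsc, -⟩ := hL
  have hcollapse : ∀ f : SMap K L, ContigClass (s.comp (c.comp f)) f :=
    fun f => hsc.comp_right f
  have hab : c.comp a = c.comp b := Subsingleton.elim _ _
  exact (hcollapse a).symm.trans (hab ▸ hcollapse b)

lemma SD_eq_zero_of_contigClass {V W : Type} [DecidableEq W] {K : ASC V} {L : ASC W}
    {m : ℕ} (φ : Fin m → SMap K L) (h : ∀ i j, ContigClass (φ i) (φ j)) : SD φ = 0 := by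
  have hcover : SDcover φ 0 := ⟨fun _ => K, fun _ => subset_rfl, fun σ hσ => ⟨0, hσ⟩,
    fun _ i j => h i j⟩
  exact le_antisymm (sInf_le ⟨0, by simp, hcover⟩) zero_le

theorem TCnMap_eq_zero_of_stronglyCollapsible_general
    {V W : Type} [DecidableEq V] [DecidableEq W] {K : ASC V} {L : ASC W}
    (phi : SMap K L)
    (hc : StronglyCollapsible K ∨ StronglyCollapsible L) (n : ℕ) :
    TCnMap phi n = 0 := by
  refine SD_eq_zero_of_contigClass _ fun i j => ?_
  rcases hc with hK | hL
  · exact (hK.contigClass (K.proj n i) (K.proj n j)).comp_left phi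
  · exact hL.contigClass _ _

/-- if `φ : L → L'` is a surjective simplicial finite-fibration
and `L` or `L'` is strongly collapsible, then `TC_n(φ) = 0`. -/
theorem TCnMap_eq_zero_of_stronglyCollapsible
    {V W : Type} [DecidableEq V] [DecidableEq W] {K : ASC V} {L : ASC W}
    (phi : SMap K L) (hsurj : Function.Surjective phi.toFun)
    (hfib : IsFiniteFibration phi)
    (hc : StronglyCollapsible K ∨ StronglyCollapsible L) (n : ℕ) :
    TCnMap phi n = 0 :=
  TCnMap_eq_zero_of_stronglyCollapsible_general phi hc n
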